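/- arXiv:2001.11914 — 4 statements merged into one kernel-verified Lean document; each statement's English description precedes it below -/
import Mathlib

section
/- Let λ:[0,1]→ℝ be continuous and γ:[0,1]→ℝ be nondecreasing, càdlàg and continuous at 0. If Z:[0,1]→ℝ² is a solution of the reflected equation dZ = AZ dλ − e₁ dγ + e₁ dK on the interval (0,1] and Z is continuous at 0, then Z is a solution on the whole interval [0,1]. -/
open MeasureTheory Set Real Filter Topology ProbabilityTheory

noncomputable section

/-- `exp(δA)` applied to a vector `v ∈ ℝ²`, where `A = [[0,1],[1,0]]`. -/
def expA (d : ℝ) (v : ℝ × ℝ) : ℝ × ℝ :=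
  (Real.cosh d * v.1 + Real.sinh d * v.2, Real.sinh d * v.1 + Real.cosh d * v.2)

/-- `(Z, K)` is a solution of the reflected equation `dZ = A Z dλ - e₁ dγ + e₁ dK` on `I`:
`Z·e₁ ≥ 0` on `I`, the Stieltjes measure `dK` is carried by `{t ∈ I | Z t · e₁ = 0}`, and
for `s ≤ t` in `I`, `Z t = e^{A(λ_t-λ_s)} Z s + ∫_s^t e^{A(λ_t-λ_u)} e₁ (dK u - dγ u)`. -/
def IsSolutionPair (lam : ℝ → ℝ) (gam K : StieltjesFunction ℝ) (I : Set ℝ)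
    (Z : ℝ → ℝ × ℝ) : Prop :=
  (∀ t ∈ I, 0 ≤ (Z t).1) ∧
  K.measure {t ∈ I | (Z t).1 ≠ 0} = 0 ∧
  ∀ s ∈ I, ∀ t ∈ I, s ≤ t →
    Z t = expA (lam t - lam s) (Z s)
      + (∫ u in Set.Ioc s t, expA (lam t - lam u) (1, 0) ∂K.measure)
      - (∫ u in Set.Ioc s t, expA (lam t - lam u) (1, 0) ∂gam.measure)

/-- `Z` is a solution of the reflected equation on `I` (for some reflection term `K`). -/
def IsSolution (lam : ℝ → ℝ) (gam : StieltjesFunction ℝ) (I : Set ℝ)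
    (Z : ℝ → ℝ × ℝ) : Prop :=
  ∃ K : StieltjesFunction ℝ, IsSolutionPair lam gam K I Z

/-! The reflection term `K`, given on `(0, 1]`, may charge the point `0`; replacing it by
`x ↦ K (max x 0)` removes that atom, so `dK` stays carried by the zero set of `Z · e₁`.
Nonnegativity of `Z · e₁` at `0` and the equation between `0` and `t` follow by letting `ε → 0⁺`
in the equation between `ε` and `t`: `λ` and `Z` are continuous at `0`, and the integrals over
`(ε, t]` converge to those over `(0, t]` by dominated convergence. -/

namespace StieltjesFunction

def restrictIoi (f : StieltjesFunction ℝ) (a : ℝ) : StieltjesFunction ℝ where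
  toFun x := f (max x a)
  mono' := f.mono.comp fun _ _ h => max_le_max h le_rfl
  right_continuous' x :=
    ContinuousWithinAt.comp (g := fun y => f y) (f := fun y => max y a)
      (f.right_continuous (max x a)) (continuous_id.max continuous_const).continuousWithinAt
      fun _ (hy : x ≤ _) => max_le_max hy le_rfl

theorem restrictIoi_apply (f : StieltjesFunction ℝ) (a x : ℝ) :
    f.restrictIoi a x = f (max x a) := rfl

theorem measure_restrictIoi (f : StieltjesFunction ℝ) (a : ℝ) :
    (f.restrictIoi a).measure = f.measure.restrict (Ioi a) := by
  refine Measure.ext_of_Ioc' _ _ (fun s t _ => ?_) fun s t hst => ?_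
  · rw [measure_Ioc]
    exact ENNReal.ofReal_ne_top
  · rw [measure_Ioc, Measure.restrict_apply measurableSet_Ioc, Ioc_inter_Ioi, measure_Ioc,
      restrictIoi_apply, restrictIoi_apply]
    rcases le_or_gt t a with hta | hat
    · rw [max_eq_right (hst.le.trans hta), max_eq_right hta, sub_self, ENNReal.ofReal_zero,
        eq_comm, ENNReal.ofReal_eq_zero, sub_nonpos]
      exact f.mono hta
    · rw [max_eq_left hat.le, sup_comm]

theorem setIntegral_Ioc_restrictIoi {E : Type*} [NormedAddCommGroup E] [NormedSpace ℝ E]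
    (f : StieltjesFunction ℝ) (g : ℝ → E) {a s : ℝ} (has : a ≤ s) (t : ℝ) :
    ∫ u in Ioc s t, g u ∂(f.restrictIoi a).measure = ∫ u in Ioc s t, g u ∂f.measure := by
  rw [measure_restrictIoi, Measure.restrict_restrict measurableSet_Ioc,
    inter_eq_left.mpr ((Ioc_subset_Ioc_left has).trans Ioc_subset_Ioi_self)]

end StieltjesFunction

theorem tendsto_setIntegral_Ioc_nhdsGT {E : Type*} [NormedAddCommGroup E] [NormedSpace ℝ E]
    {μ : Measure ℝ} {f : ℝ → E} {a b : ℝ} (hf : IntegrableOn f (Ioc a b) μ) :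
    Tendsto (fun ε => ∫ x in Ioc ε b, f x ∂μ) (𝓝[>] a) (𝓝 (∫ x in Ioc a b, f x ∂μ)) := by
  have h_indicator : ∀ᶠ ε in 𝓝[>] a,
      ∫ x in Ioc a b, (Ioc ε b).indicator f x ∂μ = ∫ x in Ioc ε b, f x ∂μ := by
    filter_upwards [self_mem_nhdsWithin] with ε (hε : a < ε)
    rw [setIntegral_indicator measurableSet_Ioc, Ioc_inter_Ioc, max_eq_right hε.le, min_self]
  refine (tendsto_integral_filter_of_dominated_convergence (fun x => ‖f x‖)
    (.of_forall fun ε => hf.aestronglyMeasurable.indicator measurableSet_Ioc)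
    (.of_forall fun ε => .of_forall fun x => norm_indicator_le_norm_self f x) hf.norm ?_).congr'
    h_indicator
  filter_upwards [ae_restrict_mem measurableSet_Ioc] with x hx
  refine tendsto_const_nhds.congr' ?_
  filter_upwards [Ioo_mem_nhdsGT hx.1] with ε hε
  exact (indicator_of_mem (show x ∈ Ioc ε b from ⟨hε.2, hx.2⟩) f).symm

theorem Filter.Tendsto.nhdsGT_of_nhdsWithin_Icc {X α : Type*} [TopologicalSpace X] [LinearOrder X]
    [OrderTopology X] {f : X → α} {l : Filter α} {a b : X} (hab : a < b)
    (h : Tendsto f (𝓝[Icc a b] a) l) : Tendsto f (𝓝[>] a) l := by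
  rw [nhdsWithin_Icc_eq_nhdsGE hab] at h
  exact h.mono_left (nhdsWithin_mono _ Ioi_subset_Ici_self)

theorem continuous_expA : Continuous (Function.uncurry expA) := by
  unfold Function.uncurry expA
  fun_prop

theorem Filter.Tendsto.expA {α : Type*} {l : Filter α} {f : α → ℝ} {g : α → ℝ × ℝ} {d : ℝ}
    {v : ℝ × ℝ} (hf : Tendsto f l (𝓝 d)) (hg : Tendsto g l (𝓝 v)) :
    Tendsto (fun x => expA (f x) (g x)) l (𝓝 (expA d v)) := by
  -- elaborating against the goal directly makes Lean unfold `expA` and time out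
  have h := (continuous_expA.tendsto (d, v)).comp (hf.prodMk_nhds hg)
  exact h

theorem ContinuousOn.expA {α : Type*} [TopologicalSpace α] {s : Set α} {f : α → ℝ}
    {g : α → ℝ × ℝ} (hf : ContinuousOn f s) (hg : ContinuousOn g s) :
    ContinuousOn (fun x => expA (f x) (g x)) s :=
  fun x hx => (hf x hx).expA (hg x hx)

@[simp]
theorem expA_zero (v : ℝ × ℝ) : expA 0 v = v := by
  simp [expA]

namespace IsSolutionPair

variable {lam : ℝ → ℝ} {gam K : StieltjesFunction ℝ} {Z : ℝ → ℝ × ℝ} {a b : ℝ}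

theorem nonneg_left (hsol : IsSolutionPair lam gam K (Ioc a b) Z) (hab : a < b)
    (hZ : Tendsto Z (𝓝[>] a) (𝓝 (Z a))) : 0 ≤ (Z a).1 := by
  refine ge_of_tendsto ((continuous_fst.tendsto _).comp hZ) ?_
  filter_upwards [Ioc_mem_nhdsGT hab] with ε hε using hsol.1 ε hε

theorem eq_from_left (hsol : IsSolutionPair lam gam K (Ioc a b) Z)
    (hlam : ContinuousOn lam (Icc a b)) (hZ : Tendsto Z (𝓝[>] a) (𝓝 (Z a)))
    {t : ℝ} (ht : t ∈ Ioc a b) :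
    Z t = expA (lam t - lam a) (Z a)
      + (∫ u in Ioc a t, expA (lam t - lam u) (1, 0) ∂K.measure)
      - (∫ u in Ioc a t, expA (lam t - lam u) (1, 0) ∂gam.measure) := by
  have hab : a < b := ht.1.trans_le ht.2
  have hf : ContinuousOn (fun u => expA (lam t - lam u) (1, 0)) (Icc a t) :=
    ((continuousOn_const.sub hlam).expA continuousOn_const).mono (Icc_subset_Icc_right ht.2)
  have hint : ∀ μ : Measure ℝ, [IsLocallyFiniteMeasure μ] →
      IntegrableOn (fun u => expA (lam t - lam u) (1, 0)) (Ioc a t) μ := fun μ _ =>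
    (hf.integrableOn_compact isCompact_Icc).mono_set Ioc_subset_Icc_self
  have hlam_a : Tendsto lam (𝓝[>] a) (𝓝 (lam a)) :=
    (hlam a (left_mem_Icc.mpr hab.le)).tendsto.nhdsGT_of_nhdsWithin_Icc hab
  have hlim := ((((tendsto_const_nhds (x := lam t)).sub hlam_a).expA hZ).add
    (tendsto_setIntegral_Ioc_nhdsGT (hint K.measure))).sub
      (tendsto_setIntegral_Ioc_nhdsGT (hint gam.measure))
  refine tendsto_nhds_unique' inferInstance tendsto_const_nhds (hlim.congr' ?_)
  filter_upwards [Ioc_mem_nhdsGT ht.1] with ε hε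
  exact (hsol.2.2 ε ⟨hε.1, hε.2.trans ht.2⟩ t ht hε.2).symm

theorem extend_Icc (hsol : IsSolutionPair lam gam K (Ioc a b) Z) (hab : a < b)
    (hlam : ContinuousOn lam (Icc a b)) (hZ : Tendsto Z (𝓝[Icc a b] a) (𝓝 (Z a))) :
    IsSolutionPair lam gam (K.restrictIoi a) (Icc a b) Z := by
  replace hZ := hZ.nhdsGT_of_nhdsWithin_Icc hab
  refine ⟨fun t ht => ?_, ?_, fun s hs t ht hst => ?_⟩
  · rcases ht.1.eq_or_lt with rfl | hat
    · exact hsol.nonneg_left hab hZ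
    · exact hsol.1 t ⟨hat, ht.2⟩
  · rw [K.measure_restrictIoi, Measure.restrict_apply' measurableSet_Ioi]
    refine measure_mono_null ?_ hsol.2.1
    rintro x ⟨⟨hx, hx0⟩, hxa⟩
    exact ⟨⟨hxa, hx.2⟩, hx0⟩
  · simp only [K.setIntegral_Ioc_restrictIoi _ hs.1]
    rcases hs.1.eq_or_lt with rfl | has
    · rcases hst.eq_or_lt with rfl | hst
      · simp
      · exact hsol.eq_from_left hlam hZ ⟨hst, ht.2⟩
    · exact hsol.2.2 s ⟨has, hs.2⟩ t ⟨has.trans_le hst, ht.2⟩ hst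

end IsSolutionPair

theorem solution_extends_to_zero_general (lam : ℝ → ℝ) (hlam : ContinuousOn lam (Set.Icc 0 1))
    (gam : StieltjesFunction ℝ)
    (Z : ℝ → ℝ × ℝ) (hZ : IsSolution lam gam (Set.Ioc 0 1) Z)
    (hZcont : Tendsto Z (nhdsWithin 0 (Set.Icc 0 1)) (𝓝 (Z 0))) :
    IsSolution lam gam (Set.Icc 0 1) Z := by
  obtain ⟨K, hK⟩ := hZ
  exact ⟨K.restrictIoi 0, IsSolutionPair.extend_Icc hK zero_lt_one hlam hZcont⟩

/-- **Lemma 1.** If `Z` solves the reflected equation on `(0,1]` and is continuous at `0`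
(within `[0,1]`), and `γ` is continuous at `0`, then `Z` solves the equation on `[0,1]`. -/
theorem solution_extends_to_zero (lam : ℝ → ℝ) (hlam : ContinuousOn lam (Set.Icc 0 1))
    (gam : StieltjesFunction ℝ) (hgam : ContinuousAt gam 0)
    (Z : ℝ → ℝ × ℝ) (hZ : IsSolution lam gam (Set.Ioc 0 1) Z)
    (hZcont : Tendsto Z (nhdsWithin 0 (Set.Icc 0 1)) (𝓝 (Z 0))) :
    IsSolution lam gam (Set.Icc 0 1) Z :=
  solution_extends_to_zero_general lam hlam gam Z hZ hZcont
end
end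

section
/- Let λ:[0,1]→ℝ be continuous, γ:[0,1]→ℝ be continuous nondecreasing, and let K be a bounded subset of (0,∞)×[0,∞). Let 𝒵 = {0} ∪ Ψ⁻¹(K) ⊆ ℝ². Then the set of all solutions Z on [0,1] of the reflected equation dZ = AZ dλ − e₁ dγ + e₁ dK with Z(0) ∈ 𝒵 is precompact in the space C([0,1],ℝ²) with the supremum norm. -/
/-!
In the light-cone coordinates `q = y - x`, `p = x + y` the flow `expA` is diagonal, so the
reflection term can only decrease `q` and only increase `p`. On the boundary `x = 0` one has
`y = q = p`, which bounds `Z` there by the data; away from the boundary `K` is flat and `Z` follows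
the free flow driven by `γ`. Splitting at the first and last boundary points of an interval this
gives a uniform bound on solutions and a common modulus of continuity depending only on those of
`λ` and `γ`, and Arzelà–Ascoli concludes.
-/

open MeasureTheory Set Real Filter Topology ProbabilityTheory

noncomputable section

/-- The map `Ψ⁻¹(ℓ, δ) = (ℓ sinh δ, ℓ cosh δ)`. -/
def PsiInv (p : ℝ × ℝ) : ℝ × ℝ := (p.1 * Real.sinh p.2, p.1 * Real.cosh p.2)

lemma abs_mul_add_mul_le_mul_max {a b x y : ℝ} (ha : 0 ≤ a) :
    |a * x + b * y| ≤ (a + |b|) * max |x| |y| := by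
  calc |a * x + b * y| ≤ a * |x| + |b| * |y| := by
        simpa [abs_mul, abs_of_nonneg ha] using abs_add_le (a * x) (b * y)
    _ ≤ a * max |x| |y| + |b| * max |x| |y| := by gcongr <;> simp
    _ = (a + |b|) * max |x| |y| := by ring

lemma norm_expA_sub_self_le (d : ℝ) (v : ℝ × ℝ) : ‖expA d v - v‖ ≤ (exp |d| - 1) * ‖v‖ := by
  have hcosh : 0 ≤ cosh d - 1 := by linarith [one_le_cosh d]
  have hsum : cosh d - 1 + |sinh d| = exp |d| - 1 := by
    rw [abs_sinh, ← cosh_abs, ← cosh_add_sinh |d|]; ring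
  have key (x y : ℝ) : |(cosh d - 1) * x + sinh d * y| ≤ (exp |d| - 1) * max |x| |y| :=
    hsum ▸ abs_mul_add_mul_le_mul_max hcosh
  simp only [Prod.norm_def, Real.norm_eq_abs, expA, Prod.fst_sub, Prod.snd_sub]
  refine max_le ?_ ?_
  · rw [show cosh d * v.1 + sinh d * v.2 - v.1 = (cosh d - 1) * v.1 + sinh d * v.2 by ring]
    exact key v.1 v.2
  · rw [show sinh d * v.1 + cosh d * v.2 - v.2 = (cosh d - 1) * v.2 + sinh d * v.1 by ring,
      max_comm]
    exact key v.2 v.1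

lemma norm_expA_le (d : ℝ) (v : ℝ × ℝ) : ‖expA d v‖ ≤ exp |d| * ‖v‖ := by
  linarith [norm_sub_norm_le (expA d v) v, norm_expA_sub_self_le d v]

lemma expA_snd_sub_fst (d : ℝ) (v : ℝ × ℝ) :
    (expA d v).2 - (expA d v).1 = exp (-d) * (v.2 - v.1) := by
  simp only [expA]
  linear_combination (v.2 - v.1) * cosh_sub_sinh d

lemma expA_fst_add_snd (d : ℝ) (v : ℝ × ℝ) :
    (expA d v).1 + (expA d v).2 = exp d * (v.1 + v.2) := by
  simp only [expA]
  linear_combination (v.1 + v.2) * cosh_add_sinh d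

lemma continuous_expA_s12 (v : ℝ × ℝ) : Continuous fun d => expA d v := by
  unfold expA; fun_prop

lemma abs_snd_sub_fst_le (v : ℝ × ℝ) : |v.2 - v.1| ≤ 2 * ‖v‖ := by
  have := abs_sub v.2 v.1
  have h1 := norm_fst_le v; have h2 := norm_snd_le v
  simp only [Real.norm_eq_abs] at h1 h2
  linarith

lemma abs_fst_add_snd_le (v : ℝ × ℝ) : |v.1 + v.2| ≤ 2 * ‖v‖ := by
  have := abs_add_le v.1 v.2
  have h1 := norm_fst_le v; have h2 := norm_snd_le v
  simp only [Real.norm_eq_abs] at h1 h2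
  linarith

lemma abs_exp_sub_one_le_exp_sub_one {d e : ℝ} (hd : |d| ≤ e) : |exp d - 1| ≤ exp e - 1 := by
  refine abs_le.2 ⟨?_, by linarith [exp_le_exp.2 ((le_abs_self d).trans hd)]⟩
  linarith [add_one_le_exp d, add_one_le_exp e, neg_le_abs d]

lemma abs_exp_mul_le {d e : ℝ} (hd : d ≤ e) (w : ℝ) : |exp d * w| ≤ exp e * |w| := by
  rw [abs_mul, abs_of_pos (exp_pos d)]
  gcongr

namespace StieltjesFunction

variable (F : StieltjesFunction ℝ) {s t : ℝ}

lemma measureReal_Ioc (hst : s ≤ t) : F.measure.real (Ioc s t) = F t - F s := by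
  rw [measureReal_def, F.measure_Ioc, ENNReal.toReal_ofReal (sub_nonneg.2 (F.mono hst))]

lemma setIntegral_Ioc_le {g : ℝ → ℝ} {C : ℝ} (hst : s ≤ t)
    (hg : IntegrableOn g (Ioc s t) F.measure) (hC : ∀ u ∈ Ioc s t, g u ≤ C) :
    ∫ u in Ioc s t, g u ∂F.measure ≤ C * (F t - F s) := by
  have hconst : IntegrableOn (fun _ => C) (Ioc s t) F.measure :=
    integrableOn_const (measure_Ioc_lt_top (μ := F.measure)).ne
  calc ∫ u in Ioc s t, g u ∂F.measure ≤ ∫ _ in Ioc s t, C ∂F.measure :=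
        setIntegral_mono_on hg hconst measurableSet_Ioc hC
    _ = C * (F t - F s) := by rw [setIntegral_const, F.measureReal_Ioc hst, smul_eq_mul, mul_comm]

lemma norm_setIntegral_Ioc_le {E : Type*} [NormedAddCommGroup E] [NormedSpace ℝ E] {g : ℝ → E}
    {C : ℝ} (hst : s ≤ t) (hC : ∀ u ∈ Ioc s t, ‖g u‖ ≤ C) :
    ‖∫ u in Ioc s t, g u ∂F.measure‖ ≤ C * (F t - F s) := by
  simpa [F.measureReal_Ioc hst] using
    norm_setIntegral_le_of_norm_le_const (measure_Ioc_lt_top (μ := F.measure)) hC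

end StieltjesFunction

theorem ContinuousMap.isCompact_closure_of_equicontinuous {X α : Type*} [TopologicalSpace X]
    [CompactSpace X] [MetricSpace α] {S : Set C(X, α)} {Q : Set α} (hQ : IsCompact Q)
    (hSQ : ∀ f ∈ S, ∀ x, f x ∈ Q) (hS : Equicontinuous ((↑) : S → X → α)) :
    IsCompact (closure S) := by
  let E := (ContinuousMap.isometryEquivBoundedOfCompact X α).toHomeomorph
  have hES : Equicontinuous ((↑) : E '' S → X → α) := by
    have hrange : range (fun g : E '' S => ⇑(g : BoundedContinuousFunction X α)) =
        range (fun f : S => ⇑(f : C(X, α))) := by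
      ext
      constructor
      · rintro ⟨⟨_, f, hf, rfl⟩, rfl⟩
        exact ⟨⟨f, hf⟩, rfl⟩
      · rintro ⟨⟨f, hf⟩, rfl⟩
        exact ⟨⟨E f, f, hf, rfl⟩, rfl⟩
    rw [equicontinuous_iff_range, hrange, ← equicontinuous_iff_range]
    exact hS
  have hclosure : closure S = E ⁻¹' closure (E '' S) := by
    rw [E.preimage_closure, E.preimage_image]
  rw [hclosure, E.isCompact_preimage]
  refine BoundedContinuousFunction.arzela_ascoli Q hQ _ ?_ hES
  rintro _ x ⟨f, hf, rfl⟩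
  exact hSQ f hf x

namespace IsSolutionPair

variable {lam : ℝ → ℝ} {gam K : StieltjesFunction ℝ} {I : Set ℝ} {Z : ℝ → ℝ × ℝ} {s t e : ℝ}

lemma clm_apply_eq (hsol : IsSolutionPair lam gam K I Z) (hlam : ContinuousOn lam (Icc s t))
    (hI : Icc s t ⊆ I) (hst : s ≤ t) (L : ℝ × ℝ →L[ℝ] ℝ) {φ : ℝ → ℝ}
    (hφ : ∀ d v, L (expA d v) = φ d * L v) :
    L (Z t) = φ (lam t - lam s) * L (Z s) + L (1, 0) *
      ((∫ u in Ioc s t, φ (lam t - lam u) ∂K.measure) -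
        ∫ u in Ioc s t, φ (lam t - lam u) ∂gam.measure) := by
  have hL (F : StieltjesFunction ℝ) : L (∫ u in Ioc s t, expA (lam t - lam u) (1, 0) ∂F.measure)
      = L (1, 0) * ∫ u in Ioc s t, φ (lam t - lam u) ∂F.measure := by
    have hint : IntegrableOn (fun u => expA (lam t - lam u) (1, 0)) (Ioc s t) F.measure :=
      ((continuous_expA_s12 _).comp_continuousOn (continuousOn_const.sub hlam)).integrableOn_Icc
        |>.mono_set Ioc_subset_Icc_self
    rw [← L.integral_comp_comm hint, ← integral_const_mul]
    simp_rw [hφ, mul_comm]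
  rw [hsol.2.2 s (hI (left_mem_Icc.2 hst)) t (hI (right_mem_Icc.2 hst)) hst, map_sub, map_add,
    hφ, hL, hL]
  ring

lemma snd_sub_fst_le (hsol : IsSolutionPair lam gam K I Z) (hlam : ContinuousOn lam (Icc s t))
    (hI : Icc s t ⊆ I) (hst : s ≤ t)
    (hosc : ∀ a ∈ Icc s t, ∀ b ∈ Icc s t, |lam a - lam b| ≤ e) :
    (Z t).2 - (Z t).1 ≤ exp (lam s - lam t) * ((Z s).2 - (Z s).1) + exp e * (gam t - gam s) := by
  have h := hsol.clm_apply_eq hlam hI hst (.snd ℝ ℝ ℝ - .fst ℝ ℝ ℝ) (φ := fun d => exp (-d))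
    fun d v => expA_snd_sub_fst d v
  simp only [sub_apply, ContinuousLinearMap.coe_snd', ContinuousLinearMap.coe_fst', neg_sub] at h
  have hK : 0 ≤ ∫ u in Ioc s t, exp (lam u - lam t) ∂K.measure :=
    setIntegral_nonneg measurableSet_Ioc fun _ _ => (exp_pos _).le
  have hgam : ∫ u in Ioc s t, exp (lam u - lam t) ∂gam.measure ≤ exp e * (gam t - gam s) := by
    refine gam.setIntegral_Ioc_le hst ?_ fun u hu => exp_le_exp.2 ?_
    · exact (continuous_exp.comp_continuousOn (hlam.sub continuousOn_const)).integrableOn_Icc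
        |>.mono_set Ioc_subset_Icc_self
    · exact (le_abs_self _).trans (hosc u (Ioc_subset_Icc_self hu) t (right_mem_Icc.2 hst))
  linarith

lemma le_fst_add_snd (hsol : IsSolutionPair lam gam K I Z) (hlam : ContinuousOn lam (Icc s t))
    (hI : Icc s t ⊆ I) (hst : s ≤ t)
    (hosc : ∀ a ∈ Icc s t, ∀ b ∈ Icc s t, |lam a - lam b| ≤ e) :
    exp (lam t - lam s) * ((Z s).1 + (Z s).2) - exp e * (gam t - gam s) ≤ (Z t).1 + (Z t).2 := by
  have h := hsol.clm_apply_eq hlam hI hst (.fst ℝ ℝ ℝ + .snd ℝ ℝ ℝ) (φ := exp)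
    fun d v => expA_fst_add_snd d v
  simp only [add_apply, ContinuousLinearMap.coe_snd', ContinuousLinearMap.coe_fst'] at h
  have hK : 0 ≤ ∫ u in Ioc s t, exp (lam t - lam u) ∂K.measure :=
    setIntegral_nonneg measurableSet_Ioc fun _ _ => (exp_pos _).le
  have hgam : ∫ u in Ioc s t, exp (lam t - lam u) ∂gam.measure ≤ exp e * (gam t - gam s) := by
    refine gam.setIntegral_Ioc_le hst ?_ fun u hu => exp_le_exp.2 ?_
    · exact (continuous_exp.comp_continuousOn (continuousOn_const.sub hlam)).integrableOn_Icc
        |>.mono_set Ioc_subset_Icc_self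
    · exact (le_abs_self _).trans (hosc t (right_mem_Icc.2 hst) u (Ioc_subset_Icc_self hu))
  linarith

lemma norm_sub_expA_le_of_measure_Ioc_eq_zero (hsol : IsSolutionPair lam gam K I Z)
    (hI : Icc s t ⊆ I) (hst : s ≤ t)
    (hosc : ∀ a ∈ Icc s t, ∀ b ∈ Icc s t, |lam a - lam b| ≤ e) (hK : K.measure (Ioc s t) = 0) :
    ‖Z t - expA (lam t - lam s) (Z s)‖ ≤ exp e * (gam t - gam s) := by
  rw [hsol.2.2 s (hI (left_mem_Icc.2 hst)) t (hI (right_mem_Icc.2 hst)) hst,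
    Measure.restrict_eq_zero.2 hK, integral_zero_measure, add_zero, sub_sub_cancel_left, norm_neg]
  refine gam.norm_setIntegral_Ioc_le hst fun u hu => ?_
  calc ‖expA (lam t - lam u) (1, 0)‖ ≤ exp |lam t - lam u| * ‖((1 : ℝ), (0 : ℝ))‖ :=
        norm_expA_le _ _
    _ ≤ exp e := by
        simpa using hosc t (right_mem_Icc.2 hst) u (Ioc_subset_Icc_self hu)

/-- `K` does not charge `(s, v]` for `v < t`; continuity of `Z` then carries the bound to `t`, so a
possible atom of `K` at `t` does no harm. -/
lemma norm_sub_le_of_fst_ne_zero (hsol : IsSolutionPair lam gam K I Z)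
    (hZ : ContinuousOn Z (Icc s t)) (hI : Icc s t ⊆ I) (hst : s ≤ t)
    (hosc : ∀ a ∈ Icc s t, ∀ b ∈ Icc s t, |lam a - lam b| ≤ e)
    (hx : ∀ u ∈ Ioo s t, (Z u).1 ≠ 0) :
    ‖Z t - Z s‖ ≤ (exp e - 1) * ‖Z s‖ + exp e * (gam t - gam s) := by
  have he : 1 ≤ exp e := one_le_exp ((abs_nonneg _).trans (hosc s (left_mem_Icc.2 hst) s
    (left_mem_Icc.2 hst)))
  rcases hst.eq_or_lt with rfl | hlt
  · simpa using mul_nonneg (sub_nonneg.2 he) (norm_nonneg (Z s))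
  have hbefore : ∀ v ∈ Ico s t, ‖Z v - Z s‖ ≤ (exp e - 1) * ‖Z s‖ + exp e * (gam t - gam s) := by
    intro v hv
    have hsub : Icc s v ⊆ Icc s t := Icc_subset_Icc_right hv.2.le
    have hK : K.measure (Ioc s v) = 0 := measure_mono_null
      (show Ioc s v ⊆ {u ∈ I | (Z u).1 ≠ 0} from fun u hu =>
        ⟨hI (hsub (Ioc_subset_Icc_self hu)), hx u ⟨hu.1, hu.2.trans_lt hv.2⟩⟩)
      hsol.2.1
    have hflat := hsol.norm_sub_expA_le_of_measure_Ioc_eq_zero (hsub.trans hI) hv.1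
      (fun a ha b hb => hosc a (hsub ha) b (hsub hb)) hK
    have hexpA : ‖expA (lam v - lam s) (Z s) - Z s‖ ≤ (exp e - 1) * ‖Z s‖ :=
      (norm_expA_sub_self_le _ _).trans <| by
        gcongr
        exact hosc v (hsub (right_mem_Icc.2 hv.1)) s (left_mem_Icc.2 hst)
    have hgam : exp e * (gam v - gam s) ≤ exp e * (gam t - gam s) := by
      gcongr
      exact hv.2.le
    linarith [norm_sub_le_norm_sub_add_norm_sub (Z v) (expA (lam v - lam s) (Z s)) (Z s)]
  refine ContinuousWithinAt.closure_le (by simp [closure_Ico hlt.ne, hst])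
    (((hZ t (right_mem_Icc.2 hst)).mono Ico_subset_Icc_self).sub continuousWithinAt_const).norm
    continuousWithinAt_const hbefore

lemma norm_le_of_fst_eq_zero (hsol : IsSolutionPair lam gam K I Z)
    (hlam : ContinuousOn lam (Icc s t)) (hI : Icc s t ⊆ I) (hst : s ≤ t)
    (hosc : ∀ a ∈ Icc s t, ∀ b ∈ Icc s t, |lam a - lam b| ≤ e) (hxt : (Z t).1 = 0) :
    ‖Z t‖ ≤ exp e * (2 * ‖Z s‖ + (gam t - gam s)) := by
  have hs := left_mem_Icc.2 hst
  have ht := right_mem_Icc.2 hst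
  have hq := hsol.snd_sub_fst_le hlam hI hst hosc
  have hp := hsol.le_fst_add_snd hlam hI hst hosc
  have hq₀ : exp (lam s - lam t) * ((Z s).2 - (Z s).1) ≤ exp e * (2 * ‖Z s‖) :=
    (le_abs_self _).trans <| (abs_exp_mul_le ((le_abs_self _).trans (hosc s hs t ht)) _).trans <| by
      gcongr; exact abs_snd_sub_fst_le _
  have hp₀ : -(exp e * (2 * ‖Z s‖)) ≤ exp (lam t - lam s) * ((Z s).1 + (Z s).2) :=
    neg_le_of_abs_le <| (abs_exp_mul_le ((le_abs_self _).trans (hosc t ht s hs)) _).trans <| by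
      gcongr; exact abs_fst_add_snd_le _
  rw [show ‖Z t‖ = |(Z t).2| by simp [Prod.norm_def, hxt], abs_le]
  rw [hxt] at hq hp
  constructor <;> linarith

lemma norm_sub_le_of_fst_eq_zero (hsol : IsSolutionPair lam gam K I Z)
    (hlam : ContinuousOn lam (Icc s t)) (hI : Icc s t ⊆ I) (hst : s ≤ t)
    (hosc : ∀ a ∈ Icc s t, ∀ b ∈ Icc s t, |lam a - lam b| ≤ e)
    (hxs : (Z s).1 = 0) (hxt : (Z t).1 = 0) :
    ‖Z t - Z s‖ ≤ (exp e - 1) * ‖Z s‖ + exp e * (gam t - gam s) := by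
  have hs := left_mem_Icc.2 hst
  have ht := right_mem_Icc.2 hst
  have hq := hsol.snd_sub_fst_le hlam hI hst hosc
  have hp := hsol.le_fst_add_snd hlam hI hst hosc
  have hexp {d : ℝ} (hd : |d| ≤ e) : |(exp d - 1) * (Z s).2| ≤ (exp e - 1) * |(Z s).2| := by
    rw [abs_mul]
    gcongr
    exact abs_exp_sub_one_le_exp_sub_one hd
  have hq₀ := abs_le.1 (hexp (hosc s hs t ht))
  have hp₀ := abs_le.1 (hexp (hosc t ht s hs))
  rw [show ‖Z t - Z s‖ = |(Z t).2 - (Z s).2| by simp [Prod.norm_def, hxs, hxt],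
    show ‖Z s‖ = |(Z s).2| by simp [Prod.norm_def, hxs], abs_le]
  rw [hxs, hxt] at hq hp
  constructor <;> linarith

lemma isCompact_setOf_fst_eq_zero (hZ : ContinuousOn Z (Icc s t)) :
    IsCompact {u ∈ Icc s t | (Z u).1 = 0} :=
  isCompact_Icc.of_isClosed_subset
    ((continuous_fst.comp_continuousOn hZ).preimage_isClosed_of_isClosed isClosed_Icc
      isClosed_singleton) inter_subset_left

lemma norm_le (hsol : IsSolutionPair lam gam K I Z) (hlam : ContinuousOn lam (Icc s t))
    (hZ : ContinuousOn Z (Icc s t)) (hI : Icc s t ⊆ I) (hst : s ≤ t)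
    (hosc : ∀ a ∈ Icc s t, ∀ b ∈ Icc s t, |lam a - lam b| ≤ e) :
    ‖Z t‖ ≤ 2 * exp (2 * e) * (‖Z s‖ + (gam t - gam s)) := by
  have he : 1 ≤ exp e := one_le_exp ((abs_nonneg _).trans (hosc s (left_mem_Icc.2 hst) s
    (left_mem_Icc.2 hst)))
  have hexp2 : exp (2 * e) = exp e * exp e := by rw [two_mul, exp_add]
  have hlast (a : ℝ) (ha : a ∈ Icc s t) (hx : ∀ u ∈ Ioo a t, (Z u).1 ≠ 0) :
      ‖Z t‖ ≤ exp e * (‖Z a‖ + (gam t - gam a)) := by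
    have hsub : Icc a t ⊆ Icc s t := Icc_subset_Icc_left ha.1
    have := hsol.norm_sub_le_of_fst_ne_zero (hZ.mono hsub) (hsub.trans hI) ha.2
      (fun a ha b hb => hosc a (hsub ha) b (hsub hb)) hx
    linarith [norm_le_norm_sub_add (Z t) (Z a)]
  have hγ : 0 ≤ gam t - gam s := sub_nonneg.2 (gam.mono hst)
  have hA : 0 ≤ ‖Z s‖ + (gam t - gam s) := by positivity
  rcases {u ∈ Icc s t | (Z u).1 = 0}.eq_empty_or_nonempty with hT | hT
  · have h := hlast s (left_mem_Icc.2 hst) fun u hu hx => hT.subset ⟨Ioo_subset_Icc_self hu, hx⟩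
    refine h.trans (mul_le_mul_of_nonneg_right ?_ hA)
    rw [hexp2]
    nlinarith
  obtain ⟨σ, hσ, hσmax⟩ := (isCompact_setOf_fst_eq_zero hZ).exists_isGreatest hT
  have hsub : Icc s σ ⊆ Icc s t := Icc_subset_Icc_right hσ.1.2
  have hZσ := hsol.norm_le_of_fst_eq_zero (hlam.mono hsub) (hsub.trans hI) hσ.1.1
    (fun a ha b hb => hosc a (hsub ha) b (hsub hb)) hσ.2
  have hZt := hlast σ hσ.1 fun u hu hx =>
    (hσmax ⟨⟨hσ.1.1.trans hu.1.le, hu.2.le⟩, hx⟩).not_gt hu.1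
  have hγ₁ : 0 ≤ gam σ - gam s := sub_nonneg.2 (gam.mono hσ.1.1)
  have hγ₂ : 0 ≤ gam t - gam σ := sub_nonneg.2 (gam.mono hσ.1.2)
  calc ‖Z t‖ ≤ exp e * (exp e * (2 * ‖Z s‖ + (gam σ - gam s)) + (gam t - gam σ)) := by
        refine hZt.trans ?_
        gcongr
    _ ≤ exp e * (exp e * (2 * ‖Z s‖ + (gam σ - gam s)) + exp e * (gam t - gam σ)) := by
        gcongr
        exact le_mul_of_one_le_left hγ₂ he
    _ = exp (2 * e) * (2 * ‖Z s‖ + (gam t - gam s)) := by rw [hexp2]; ring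
    _ ≤ 2 * exp (2 * e) * (‖Z s‖ + (gam t - gam s)) := by nlinarith [exp_pos (2 * e)]

lemma norm_sub_le (hsol : IsSolutionPair lam gam K I Z) (hlam : ContinuousOn lam (Icc s t))
    (hZ : ContinuousOn Z (Icc s t)) (hI : Icc s t ⊆ I) (hst : s ≤ t)
    (hosc : ∀ a ∈ Icc s t, ∀ b ∈ Icc s t, |lam a - lam b| ≤ e) {R : ℝ}
    (hR : ∀ u ∈ Icc s t, ‖Z u‖ ≤ R) :
    ‖Z t - Z s‖ ≤ 3 * (exp e - 1) * R + exp e * (gam t - gam s) := by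
  have he : 0 ≤ exp e - 1 := sub_nonneg.2 <| one_le_exp <|
    (abs_nonneg _).trans (hosc s (left_mem_Icc.2 hst) s (left_mem_Icc.2 hst))
  have hR0 : 0 ≤ R := (norm_nonneg _).trans (hR s (left_mem_Icc.2 hst))
  have hpiece (a b : ℝ) (hab : a ≤ b) (hsub : Icc a b ⊆ Icc s t)
      (hx : ∀ u ∈ Ioo a b, (Z u).1 ≠ 0) :
      ‖Z b - Z a‖ ≤ (exp e - 1) * R + exp e * (gam b - gam a) := by
    have := hsol.norm_sub_le_of_fst_ne_zero (hZ.mono hsub) (hsub.trans hI) hab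
      (fun a ha b hb => hosc a (hsub ha) b (hsub hb)) hx
    have := mul_le_mul_of_nonneg_left (hR a (hsub (left_mem_Icc.2 hab))) he
    linarith
  rcases {u ∈ Icc s t | (Z u).1 = 0}.eq_empty_or_nonempty with hT | hT
  · have := hpiece s t hst subset_rfl fun u hu hx => hT.subset ⟨Ioo_subset_Icc_self hu, hx⟩
    nlinarith
  obtain ⟨τ, hτ, hτmin⟩ := (isCompact_setOf_fst_eq_zero hZ).exists_isLeast hT
  obtain ⟨σ, hσ, hσmax⟩ := (isCompact_setOf_fst_eq_zero hZ).exists_isGreatest hT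
  have hτσ : τ ≤ σ := hσmax hτ
  have hsub : Icc τ σ ⊆ Icc s t := Icc_subset_Icc hτ.1.1 hσ.1.2
  have h₁ := hpiece s τ hτ.1.1 (Icc_subset_Icc_right hτ.1.2) fun u hu hx =>
    (hτmin ⟨⟨hu.1.le, hu.2.le.trans hτ.1.2⟩, hx⟩).not_gt hu.2
  have h₂ := hsol.norm_sub_le_of_fst_eq_zero (hlam.mono hsub) (hsub.trans hI) hτσ
    (fun a ha b hb => hosc a (hsub ha) b (hsub hb)) hτ.2 hσ.2
  have h₃ := hpiece σ t hσ.1.2 (Icc_subset_Icc_left hσ.1.1) fun u hu hx =>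
    (hσmax ⟨⟨hσ.1.1.trans hu.1.le, hu.2.le⟩, hx⟩).not_gt hu.1
  have hZτ := mul_le_mul_of_nonneg_left (hR τ hτ.1) he
  linarith [norm_sub_le_norm_sub_add_norm_sub (Z t) (Z σ) (Z s),
    norm_sub_le_norm_sub_add_norm_sub (Z σ) (Z τ) (Z s)]

end IsSolutionPair

theorem exists_pos_forall_norm_sub_lt {lam : ℝ → ℝ} {gam : StieltjesFunction ℝ} {a b : ℝ}
    (hlam : ContinuousOn lam (Icc a b)) (hgam : ContinuousOn gam (Icc a b)) (R : ℝ) {ε : ℝ}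
    (hε : 0 < ε) :
    ∃ δ > 0, ∀ (K : StieltjesFunction ℝ) (Z : ℝ → ℝ × ℝ),
      IsSolutionPair lam gam K (Icc a b) Z → ContinuousOn Z (Icc a b) →
      (∀ u ∈ Icc a b, ‖Z u‖ ≤ R) →
      ∀ s ∈ Icc a b, ∀ t ∈ Icc a b, s ≤ t → t - s < δ → ‖Z t - Z s‖ < ε := by
  have hmod : Tendsto (fun e => 3 * (exp e - 1) * R + exp e * e) (𝓝[>] 0) (𝓝 0) := by
    have hc : Continuous fun e => 3 * (exp e - 1) * R + exp e * e := by fun_prop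
    simpa using (hc.tendsto 0).mono_left nhdsWithin_le_nhds
  obtain ⟨e, heε, he⟩ := ((hmod.eventually (gt_mem_nhds hε)).and self_mem_nhdsWithin).exists
  obtain ⟨δ₁, hδ₁, hlamδ⟩ := Metric.uniformContinuousOn_iff.1
    (isCompact_Icc.uniformContinuousOn_of_continuous hlam) e he
  obtain ⟨δ₂, hδ₂, hgamδ⟩ := Metric.uniformContinuousOn_iff.1
    (isCompact_Icc.uniformContinuousOn_of_continuous hgam) e he
  refine ⟨min δ₁ δ₂, lt_min hδ₁ hδ₂, fun K Z hsol hZ hR s hs t ht hst hδ => ?_⟩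
  have hsub : Icc s t ⊆ Icc a b := Icc_subset_Icc hs.1 ht.2
  have hclose (u : ℝ) (hu : u ∈ Icc s t) (v : ℝ) (hv : v ∈ Icc s t) : dist u v < min δ₁ δ₂ :=
    (Real.dist_le_of_mem_Icc hu hv).trans_lt hδ
  have hinc := hsol.norm_sub_le (hlam.mono hsub) (hZ.mono hsub) hsub hst
    (fun u hu v hv => (hlamδ u (hsub hu) v (hsub hv)
      ((hclose u hu v hv).trans_le (min_le_left _ _))).le) fun u hu => hR u (hsub hu)
  have hγ : gam t - gam s ≤ e := (le_abs_self _).trans (hgamδ t ht s hs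
    ((hclose t (right_mem_Icc.2 hst) s (left_mem_Icc.2 hst)).trans_le (min_le_right _ _))).le
  calc ‖Z t - Z s‖ ≤ 3 * (exp e - 1) * R + exp e * (gam t - gam s) := hinc
    _ ≤ 3 * (exp e - 1) * R + exp e * e := by gcongr
    _ < ε := heε

theorem isCompact_closure_setOf_isSolution {lam : ℝ → ℝ} {gam : StieltjesFunction ℝ}
    {B : Set (ℝ × ℝ)} (hlam : ContinuousOn lam (Icc 0 1)) (hgam : Continuous gam)
    (hB : Bornology.IsBounded B) :
    IsCompact (closure {f : C(Icc (0 : ℝ) 1, ℝ × ℝ) | ∃ Z : ℝ → ℝ × ℝ,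
      IsSolution lam gam (Icc 0 1) Z ∧ Z 0 ∈ B ∧ ∀ u : Icc (0 : ℝ) 1, f u = Z u}) := by
  set S := {f : C(Icc (0 : ℝ) 1, ℝ × ℝ) | ∃ Z : ℝ → ℝ × ℝ,
    IsSolution lam gam (Icc 0 1) Z ∧ Z 0 ∈ B ∧ ∀ u : Icc (0 : ℝ) 1, f u = Z u}
  obtain ⟨r, hr⟩ := hB.exists_norm_le
  have hD (a : ℝ) (ha : a ∈ Icc 0 1) (b : ℝ) (hb : b ∈ Icc 0 1) :
      |lam a - lam b| ≤ Metric.diam (lam '' Icc 0 1) :=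
    Metric.dist_le_diam_of_mem (isCompact_Icc.image_of_continuousOn hlam).isBounded
      (mem_image_of_mem lam ha) (mem_image_of_mem lam hb)
  set R := 2 * exp (2 * Metric.diam (lam '' Icc 0 1)) * (r + (gam 1 - gam 0)) with hR_def
  have hS : ∀ f ∈ S, ∃ Z K, IsSolutionPair lam gam K (Icc 0 1) Z ∧
      ContinuousOn Z (Icc 0 1) ∧ (∀ u : Icc (0 : ℝ) 1, f u = Z u) ∧
      ∀ u ∈ Icc (0 : ℝ) 1, ‖Z u‖ ≤ R := by
    rintro f ⟨Z, ⟨K, hsol⟩, hZ0, hfZ⟩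
    have hZ : ContinuousOn Z (Icc 0 1) := by
      rw [continuousOn_iff_continuous_domRestrict]
      exact (show (Icc (0 : ℝ) 1).domRestrict Z = f from funext fun u => (hfZ u).symm) ▸
        f.continuous
    refine ⟨Z, K, hsol, hZ, hfZ, fun u hu => ?_⟩
    have hsub : Icc 0 u ⊆ Icc 0 1 := Icc_subset_Icc_right hu.2
    refine (hsol.norm_le (hlam.mono hsub) (hZ.mono hsub) hsub hu.1
      fun a ha b hb => hD a (hsub ha) b (hsub hb)).trans ?_
    rw [hR_def]
    gcongr
    · exact hr _ hZ0
    · exact hu.2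
  refine ContinuousMap.isCompact_closure_of_equicontinuous (isCompact_closedBall 0 R)
    (fun f hf x => ?_) (Metric.uniformEquicontinuous_iff.2 fun ε hε => ?_).equicontinuous
  · obtain ⟨Z, K, -, -, hfZ, hR⟩ := hS f hf
    simpa [hfZ] using hR x x.2
  obtain ⟨δ, hδ, hmod⟩ := exists_pos_forall_norm_sub_lt hlam hgam.continuousOn R hε
  refine ⟨δ, hδ, fun x y hxy ⟨f, hf⟩ => ?_⟩
  obtain ⟨Z, K, hsol, hZ, hfZ, hR⟩ := hS f hf
  rw [Subtype.dist_eq, Real.dist_eq] at hxy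
  change dist (f x) (f y) < ε
  rw [dist_eq_norm, hfZ, hfZ]
  rcases le_total (x : ℝ) y with hle | hle
  · rw [norm_sub_rev]
    exact hmod K Z hsol hZ hR x x.2 y y.2 hle <| by
      rwa [abs_sub_comm, abs_of_nonneg (sub_nonneg.2 hle)] at hxy
  · exact hmod K Z hsol hZ hR y y.2 x x.2 hle <| by
      rwa [abs_of_nonneg (sub_nonneg.2 hle)] at hxy

theorem solutions_precompact_general (lam : ℝ → ℝ) (hlam : ContinuousOn lam (Set.Icc 0 1))
    (gam : StieltjesFunction ℝ) (hgam : Continuous gam)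
    (Kset : Set (ℝ × ℝ)) (hKb : Bornology.IsBounded Kset) :
    IsCompact (closure {f : C(Set.Icc (0:ℝ) 1, ℝ × ℝ) | ∃ Z : ℝ → ℝ × ℝ,
      IsSolution lam gam (Set.Icc 0 1) Z ∧
      Z 0 ∈ insert (0 : ℝ × ℝ) (PsiInv '' Kset) ∧
      ∀ u : Set.Icc (0:ℝ) 1, f u = Z u}) := by
  have hPsiInv : Continuous PsiInv := by unfold PsiInv; fun_prop
  refine isCompact_closure_setOf_isSolution hlam hgam (Bornology.IsBounded.insert ?_ 0)
  exact (hKb.isCompact_closure.image hPsiInv).isBounded.subset (image_mono subset_closure)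

/-- **Lemma 3 (5).** For `𝒵 = {0} ∪ Ψ⁻¹(K)` with `K` a bounded subset of `(0,∞) × [0,∞)`,
the set of solutions of the reflected equation on `[0,1]` starting in `𝒵` is precompact
in `C([0,1], ℝ²)`. -/
theorem solutions_precompact (lam : ℝ → ℝ) (hlam : ContinuousOn lam (Set.Icc 0 1))
    (gam : StieltjesFunction ℝ) (hgam : Continuous gam)
    (Kset : Set (ℝ × ℝ)) (hKb : Bornology.IsBounded Kset)
    (hKsub : Kset ⊆ Set.Ioi (0:ℝ) ×ˢ Set.Ici (0:ℝ)) :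
    IsCompact (closure {f : C(Set.Icc (0:ℝ) 1, ℝ × ℝ) | ∃ Z : ℝ → ℝ × ℝ,
      IsSolution lam gam (Set.Icc 0 1) Z ∧
      Z 0 ∈ insert (0 : ℝ × ℝ) (PsiInv '' Kset) ∧
      ∀ u : Set.Icc (0:ℝ) 1, f u = Z u}) :=
  solutions_precompact_general lam hlam gam hgam Kset hKb
end
end

section
/- Let (δ_k)_{k≥0} be a sequence of elements of (0,1) such that Σ_{k≥0} δ_k²/log(δ_k^{-1}) < ∞ and Σ_{k≥0} δ_k exp(−(1/2) Σ_{0≤j≤k} δ_j²) < ∞. Then Σ_{k≥0} δ_k² < ∞. -/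
open MeasureTheory Set Real Filter Topology ProbabilityTheory

noncomputable section

/-- **Lemma 4.** If `(δ_k) ⊆ (0,1)` satisfies `Σ δ_k² / log(δ_k⁻¹) < ∞` and
`Σ δ_k exp(-(1/2) Σ_{j≤k} δ_j²) < ∞`, then `Σ δ_k² < ∞`. -/
theorem summable_sq_of_logvar (δ : ℕ → ℝ) (hδ : ∀ k, δ k ∈ Set.Ioo (0:ℝ) 1)
    (h1 : Summable fun k => δ k ^ 2 / Real.log (δ k)⁻¹)
    (h2 : Summable fun k => δ k * Real.exp (-(1/2) * ∑ j ∈ Finset.range (k + 1), δ j ^ 2)) :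
    Summable fun k => δ k ^ 2 := by
  by_contra hns
  set S : ℕ → ℝ := fun n => ∑ j ∈ Finset.range n, δ j ^ 2 with hSdef
  have hδpos : ∀ k, 0 < δ k := fun k => (hδ k).1
  have hδlt : ∀ k, δ k < 1 := fun k => (hδ k).2
  have hsq : ∀ k, 0 < δ k ^ 2 := fun k => pow_pos (hδpos k) 2
  have hSpos : ∀ n, 0 < S (n + 1) := by
    intro n
    exact Finset.sum_pos (fun i _ => hsq i) ⟨0, Finset.mem_range.mpr (Nat.succ_pos n)⟩
  have hSnonneg : ∀ n, 0 ≤ S n := by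
    intro n
    exact Finset.sum_nonneg fun i _ => (hsq i).le
  have hSmono : Monotone S := by
    intro a b hab
    exact Finset.sum_le_sum_of_subset_of_nonneg (Finset.range_subset_range.mpr hab)
      (fun i _ _ => (hsq i).le)
  have hStop : Tendsto S atTop atTop :=
    (not_summable_iff_tendsto_nat_atTop_of_nonneg (fun k => (hsq k).le)).mp hns
  set c : ℕ → ℝ := fun k => δ k ^ 2 / S (k + 1) with hcdef
  have hcnonneg : ∀ k, 0 ≤ c k := fun k => div_nonneg (hsq k).le (hSpos k).le
  have hS1 : 0 < S 1 := hSpos 0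
  have hcle : ∀ k, c k ≤ (1/2) * (δ k ^ 2 / Real.log (δ k)⁻¹)
      + (S 1)⁻¹ * (δ k * Real.exp (-(1/2) * S (k + 1))) := by
    intro k
    have hlogpos : 0 < Real.log (δ k)⁻¹ :=
      Real.log_pos (one_lt_inv_iff₀.mpr ⟨hδpos k, hδlt k⟩)
    have ht1 : 0 ≤ (1/2) * (δ k ^ 2 / Real.log (δ k)⁻¹) := by positivity
    have ht2 : 0 ≤ (S 1)⁻¹ * (δ k * Real.exp (-(1/2) * S (k + 1))) := mul_nonneg (inv_nonneg.mpr hS1.le) (mul_nonneg (hδpos k).le (Real.exp_nonneg _))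
    rcases le_or_gt (δ k) (Real.exp (-(1/2) * S (k + 1))) with hcase | hcase
    · have hA : δ k ^ 2 ≤ δ k * Real.exp (-(1/2) * S (k + 1)) := by
        have := mul_le_mul_of_nonneg_left hcase (hδpos k).le
        nlinarith [this]
      have hB : c k ≤ δ k ^ 2 / S 1 :=
        div_le_div_of_nonneg_left (hsq k).le hS1 (hSmono (Nat.one_le_iff_ne_zero.mpr (Nat.succ_ne_zero k)))
      have hC : δ k ^ 2 / S 1 ≤ (δ k * Real.exp (-(1/2) * S (k + 1))) / S 1 :=
        div_le_div_of_nonneg_right hA hS1.le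
      have : (δ k * Real.exp (-(1/2) * S (k + 1))) / S 1
          = (S 1)⁻¹ * (δ k * Real.exp (-(1/2) * S (k + 1))) := by
        rw [div_eq_inv_mul]
      linarith [hB.trans (hC.trans_eq this)]
    · have hlog : Real.log (δ k)⁻¹ < (1/2) * S (k + 1) := by
        have h' : -(1/2) * S (k + 1) < Real.log (δ k) :=
          (Real.lt_log_iff_exp_lt (hδpos k)).mpr hcase
        rw [Real.log_inv]
        linarith
      have h2log : 0 < 2 * Real.log (δ k)⁻¹ := by linarith
      have hB : c k ≤ δ k ^ 2 / (2 * Real.log (δ k)⁻¹) := by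
        apply div_le_div_of_nonneg_left (hsq k).le h2log
        linarith
      have : δ k ^ 2 / (2 * Real.log (δ k)⁻¹) = (1/2) * (δ k ^ 2 / Real.log (δ k)⁻¹) := by
        field_simp
      linarith [hB.trans_eq this]
  have hc : Summable c :=
    Summable.of_nonneg_of_le hcnonneg hcle ((h1.mul_left (1/2)).add (h2.mul_left (S 1)⁻¹))
  -- now derive a contradiction
  set T : ℝ := ∑' k, c k with hTdef
  have hPtend : Tendsto (fun n => ∑ i ∈ Finset.range n, c i) atTop (𝓝 T) :=
    hc.hasSum.tendsto_sum_nat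
  obtain ⟨m, hm⟩ : ∃ m, T - 1/2 < ∑ i ∈ Finset.range m, c i := by
    exact (hPtend.eventually (eventually_gt_nhds (by linarith : T - 1/2 < T))).exists
  obtain ⟨N, hN1, hN2⟩ : ∃ N, 2 * S m + 2 ≤ S N ∧ m ≤ N :=
    ((hStop.eventually_ge_atTop (2 * S m + 2)).and (eventually_ge_atTop m)).exists
  have hSN : 0 < S N := by linarith [hSnonneg m]
  -- upper bound on the block sum
  have hupper : ∑ i ∈ Finset.Ico m N, c i < 1/2 := by
    have hsplit : ∑ i ∈ Finset.Ico m N, c i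
        = ∑ i ∈ Finset.range N, c i - ∑ i ∈ Finset.range m, c i :=
      Finset.sum_Ico_eq_sub _ hN2
    have hle : ∑ i ∈ Finset.range N, c i ≤ T :=
      Summable.sum_le_tsum _ (fun i _ => hcnonneg i) hc
    rw [hsplit]
    linarith
  -- lower bound on the block sum
  have hlower : (S N - S m) / S N ≤ ∑ i ∈ Finset.Ico m N, c i := by
    have hterm : ∀ i ∈ Finset.Ico m N, δ i ^ 2 / S N ≤ c i := by
      intro i hi
      have hiN : i + 1 ≤ N := Finset.mem_Ico.mp hi |>.2
      exact div_le_div_of_nonneg_left (hsq i).le (hSpos i) (hSmono hiN)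
    calc (S N - S m) / S N = (∑ i ∈ Finset.Ico m N, δ i ^ 2) / S N := by
          rw [Finset.sum_Ico_eq_sub _ hN2]
      _ = ∑ i ∈ Finset.Ico m N, δ i ^ 2 / S N := by rw [Finset.sum_div]
      _ ≤ ∑ i ∈ Finset.Ico m N, c i := Finset.sum_le_sum hterm
  have : (1:ℝ)/2 ≤ (S N - S m) / S N := by
    rw [le_div_iff₀ hSN]
    linarith [hSnonneg m]
  linarith
end
end

section
/- Let ω be a modulus with ω(r) > 0 for all r > 0, and suppose liminf_{η→0⁺} 2ω(η)/ω(2η) > 1. Then there exists K > 0 such that for all sufficiently small ε > 0: ∫_0^{ε·θ_ω(ε)} max(ω(r) − 2r/ε, 0) dr ≥ K^{-1}·ε·θ_ω(ε)². -/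
/-!
Since `ω` grows at most linearly, for small `ε` the supremum `θ_ω(ε)` is attained at some
`x ≤ 2 ε ω(1)`. Comparing the values at `x` and `x/2` and using the
doubling bound `c ω(x) ≤ 2 ω(x/2)` (with `c > 1`, from the liminf hypothesis) gives
`x ≲ ε θ_ω(ε)` and `θ_ω(ε) ≍ ω(x)`. Halving `x` a fixed number `k` of times keeps
`ω ≳ θ_ω(ε)` while pushing the point below a small multiple of `ε θ_ω(ε)`; just to its right
the integrand is `≳ θ_ω(ε)` on an interval of length `≍ ε θ_ω(ε)`.
-/

open MeasureTheory Set Real Filter Topology ProbabilityTheory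

noncomputable section

def IsModulus (om : ℝ → ℝ) : Prop :=
  ContinuousOn om (Set.Ici 0) ∧ MonotoneOn om (Set.Ici 0) ∧
  (∀ a ∈ Set.Ici (0:ℝ), ∀ b ∈ Set.Ici (0:ℝ), om (a + b) ≤ om a + om b) ∧
  om 0 = 0 ∧ (∀ r ∈ Set.Ici (0:ℝ), 0 ≤ om r)

def thetaOmega (om : ℝ → ℝ) (ε : ℝ) : ℝ :=
  sSup ((fun r => om r - r / ε) '' Set.Ici 0)

lemma exists_isMaxOn_Ici_of_le {g : ℝ → ℝ} {R : ℝ} (hR : 0 ≤ R)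
    (hg : ContinuousOn g (Icc 0 R)) (hout : ∀ r, R < r → g r ≤ g 0) :
    ∃ x ∈ Icc 0 R, IsMaxOn g (Ici 0) x := by
  obtain ⟨x, hx, hmax⟩ := isCompact_Icc.exists_isMaxOn ⟨0, le_rfl, hR⟩ hg
  refine ⟨x, hx, fun r (hr : 0 ≤ r) => ?_⟩
  rcases le_or_gt r R with h | h
  · exact hmax ⟨hr, h⟩
  · exact (hout r h).trans (hmax ⟨le_rfl, hR⟩)

lemma pow_mul_le_apply_div_pow {om : ℝ → ℝ} {c η₀ : ℝ} (hc : 0 ≤ c)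
    (hd : ∀ η ∈ Icc 0 η₀, c * om (2 * η) ≤ 2 * om η) (n : ℕ) {t : ℝ} (ht : t ∈ Icc 0 η₀) :
    (c / 2) ^ n * om t ≤ om (t / 2 ^ n) := by
  induction n with
  | zero => simp
  | succ n ih =>
    have hmem : t / 2 ^ (n + 1) ∈ Icc 0 η₀ :=
      ⟨by linarith [div_nonneg ht.1 (by positivity : (0:ℝ) ≤ 2 ^ (n + 1))],
        (div_le_self ht.1 (one_le_pow₀ one_le_two)).trans ht.2⟩
    have hdouble := hd _ hmem
    rw [show 2 * (t / 2 ^ (n + 1)) = t / 2 ^ n by rw [pow_succ]; field_simp] at hdouble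
    calc (c / 2) ^ (n + 1) * om t = c / 2 * ((c / 2) ^ n * om t) := by ring
      _ ≤ c / 2 * om (t / 2 ^ n) := by gcongr
      _ ≤ om (t / 2 ^ (n + 1)) := by linarith

lemma le_two_sub_mul_of_isMaxOn {om : ℝ → ℝ} {c ε x : ℝ} (hε : 0 < ε) (hx : 0 ≤ x)
    (hmax : IsMaxOn (fun r => om r - r / ε) (Ici 0) x) (hd : c * om x ≤ 2 * om (x / 2)) :
    x ≤ (2 - c) * (ε * om x) := by
  have hhalf : om (x / 2) - x / 2 / ε ≤ om x - x / ε := hmax (show 0 ≤ x / 2 by positivity)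
  have hhalf' : ε * om (x / 2) ≤ ε * om x - x / 2 := by
    have := mul_le_mul_of_nonneg_left hhalf hε.le
    rw [mul_sub, mul_sub, mul_div_cancel₀ _ hε.ne', mul_div_cancel₀ _ hε.ne'] at this
    linarith
  nlinarith [mul_le_mul_of_nonneg_left hd hε.le]

namespace IsModulus

variable {om : ℝ → ℝ}

lemma natCast_mul_le (hom : IsModulus om) {a : ℝ} (ha : 0 ≤ a) (n : ℕ) :
    om (n * a) ≤ n * om a := by
  obtain ⟨-, -, hsub, h0, -⟩ := hom
  induction n with
  | zero => simp [h0]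
  | succ n ih =>
    have := hsub (n * a) (mem_Ici.2 (by positivity)) a ha
    push_cast
    rw [add_one_mul]
    linarith

lemma le_add_one_mul (hom : IsModulus om) {r : ℝ} (hr : 0 ≤ r) : om r ≤ (r + 1) * om 1 := by
  obtain ⟨-, hmono, -, -, hnn⟩ := id hom
  have hceil : om r ≤ om (⌈r⌉₊ * 1) :=
    hmono hr (mem_Ici.2 (by positivity)) (by simpa using Nat.le_ceil r)
  have hsub := hom.natCast_mul_le zero_le_one ⌈r⌉₊
  have hlt : (⌈r⌉₊ : ℝ) ≤ r + 1 := (Nat.ceil_lt_add_one hr).le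
  nlinarith [hnn 1 (mem_Ici.2 zero_le_one)]

lemma mul_le_self (hom : IsModulus om) {ε r : ℝ} (hε : 0 ≤ ε) (h1 : 2 * ε * om 1 ≤ 1)
    (hr : 2 * ε * om 1 ≤ r) : ε * om r ≤ r := by
  have hr0 : 0 ≤ r := le_trans (by nlinarith [hom.2.2.2.2 1 (mem_Ici.2 zero_le_one)]) hr
  nlinarith [mul_le_mul_of_nonneg_left (hom.le_add_one_mul hr0) hε]

lemma exists_doubling
    (hom : IsModulus om)
    (hliminf : 1 < liminf (fun η : ℝ => 2 * om η / om (2 * η)) (𝓝[>] 0)) :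
    ∃ c ∈ Ioc (1:ℝ) 2, ∃ η₀ > 0, ∀ η ∈ Icc 0 η₀, c * om (2 * η) ≤ 2 * om η := by
  obtain ⟨-, -, -, h0, hnn⟩ := hom
  set L := liminf (fun η : ℝ => 2 * om η / om (2 * η)) (𝓝[>] 0)
  have hbdd : IsBoundedUnder (· ≥ ·) (𝓝[>] (0:ℝ)) (fun η => 2 * om η / om (2 * η)) :=
    isBoundedUnder_of_eventually_ge (a := 0) <| eventually_nhdsWithin_of_forall
      fun η (hη : 0 < η) => div_nonneg (by linarith [hnn η hη.le]) (hnn _ (mem_Ici.2 (by positivity)))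
  have hcL : min ((1 + L) / 2) 2 < L := (min_le_left _ _).trans_lt (by linarith)
  obtain ⟨η₀, hη₀, hratio⟩ :=
    mem_nhdsGT_iff_exists_Ioc_subset.1 (eventually_lt_of_lt_liminf hcL hbdd)
  refine ⟨min ((1 + L) / 2) 2, ⟨lt_min (by linarith) one_lt_two, min_le_right _ _⟩, η₀, hη₀, ?_⟩
  rintro η ⟨hη0, hη⟩
  rcases hη0.eq_or_lt with rfl | hη0
  · simp [h0]
  rcases (hnn (2 * η) (mem_Ici.2 (by positivity))).eq_or_lt with hzero | hpos
  · rw [← hzero, mul_zero]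
    linarith [hnn η hη0.le]
  · exact ((lt_div_iff₀ hpos).1 (hratio ⟨hη0, hη⟩)).le

lemma mul_sq_le_integral (hom : IsModulus om) {ε s A M : ℝ} (hε : 0 < ε) (hs : 0 ≤ s)
    (hA : A ≤ om s) (hsA : 8 * s ≤ ε * A) (hAM : ε * A / 4 ≤ M) :
    ε * A ^ 2 / 16 ≤ ∫ r in Ioc 0 M, max (om r - 2 * r / ε) 0 := by
  obtain ⟨hcont, hmono, -, -, -⟩ := hom
  have hA0 : 0 ≤ A := nonneg_of_mul_nonneg_right (by linarith) hε
  set g := fun r => max (om r - 2 * r / ε) 0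
  have hgint : IntegrableOn g (Ioc 0 M) :=
    (((hcont.mono Icc_subset_Ici_self).sub (by fun_prop)).sup continuousOn_const
      |>.integrableOn_Icc).mono_set Ioc_subset_Icc_self
  have hsub : Ioc s (ε * A / 4) ⊆ Ioc 0 M := Ioc_subset_Ioc hs hAM
  have hplateau : ∀ r ∈ Ioc s (ε * A / 4), A / 2 ≤ g r := by
    rintro r ⟨hsr, hr⟩
    have hωr : A ≤ om r := hA.trans (hmono hs (hs.trans hsr.le) hsr.le)
    have hlin : 2 * r / ε ≤ A / 2 := by
      rw [div_le_iff₀ hε]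
      linarith
    exact le_max_of_le_left (by linarith)
  have hlen : ε * A / 8 ≤ volume.real (Ioc s (ε * A / 4)) := by
    rw [Real.volume_real_Ioc_of_le (by linarith)]
    linarith
  calc ε * A ^ 2 / 16 = A / 2 * (ε * A / 8) := by ring
    _ ≤ A / 2 * volume.real (Ioc s (ε * A / 4)) := by gcongr
    _ ≤ ∫ r in Ioc s (ε * A / 4), g r :=
      setIntegral_ge_of_const_le_real measurableSet_Ioc measure_Ioc_lt_top.ne hplateau
        (hgint.mono_set hsub)
    _ ≤ ∫ r in Ioc 0 M, g r :=
      setIntegral_mono_set hgint (.of_forall fun _ => le_max_right _ _) hsub.eventuallyLE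

lemma integral_lower_bound_of_isMaxOn (hom : IsModulus om) {c η₀ ε x : ℝ} {k : ℕ}
    (hε : 0 < ε) (hc : c ∈ Ioc 1 2) (hk : 8 ≤ c ^ k * (c - 1))
    (hd : ∀ η ∈ Icc 0 η₀, c * om (2 * η) ≤ 2 * om η) (hx : x ∈ Icc 0 η₀)
    (hmax : IsMaxOn (fun r => om r - r / ε) (Ici 0) x) :
    ε * ((c / 2) ^ k * (om x - x / ε)) ^ 2 / 16 ≤
      ∫ r in Ioc 0 (ε * (om x - x / ε)), max (om r - 2 * r / ε) 0 := by
  obtain ⟨-, -, -, h0, hnn⟩ := id hom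
  set θ := om x - x / ε
  have hθ0 : 0 ≤ θ := by
    have h : om 0 - 0 / ε ≤ θ := hmax (mem_Ici.2 le_rfl)
    simpa [h0] using h
  have hεθ : ε * θ = ε * om x - x := by simp only [θ]; field_simp
  have hωx : 0 ≤ om x := hnn x hx.1
  have hxω : x ≤ (2 - c) * (ε * om x) := by
    have h := hd (x / 2) ⟨by linarith [hx.1], by linarith [hx.1, hx.2]⟩
    rw [mul_div_cancel₀ x two_ne_zero] at h
    exact le_two_sub_mul_of_isMaxOn hε hx.1 hmax h
  have hκ0 : 0 ≤ (c / 2) ^ k := by positivity [hc.1]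
  have hκ1 : (c / 2) ^ k ≤ 1 := pow_le_one₀ (by linarith [hc.1]) (by linarith [hc.2])
  refine hom.mul_sq_le_integral hε (s := x / 2 ^ k) (by positivity [hx.1]) ?_ ?_ ?_
  · calc (c / 2) ^ k * θ ≤ (c / 2) ^ k * om x := by gcongr; linarith [div_nonneg hx.1 hε.le]
      _ ≤ om (x / 2 ^ k) := pow_mul_le_apply_div_pow (by linarith [hc.1]) hd k hx
  · have h8x : 8 * x ≤ c ^ k * (ε * θ) := by
      have hεω : 0 ≤ ε * om x := mul_nonneg hε.le hωx
      have hck : 0 ≤ c ^ k := by positivity [hc.1]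
      nlinarith [mul_le_mul_of_nonneg_right hk hεω, hc.1, hc.2]
    calc 8 * (x / 2 ^ k) = 8 * x / 2 ^ k := by ring
      _ ≤ c ^ k * (ε * θ) / 2 ^ k := by gcongr
      _ = ε * ((c / 2) ^ k * θ) := by rw [div_pow]; ring
  · nlinarith [mul_le_mul_of_nonneg_right hκ1 (mul_nonneg hε.le hθ0)]

end IsModulus

theorem integral_lower_bound_general (om : ℝ → ℝ) (hom : IsModulus om)
    (hliminf :
      1 < Filter.liminf (fun η : ℝ => 2 * om η / om (2 * η)) (nhdsWithin 0 (Set.Ioi 0))) :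
    ∃ K > (0:ℝ), ∃ ε₀ > (0:ℝ), ∀ ε : ℝ, 0 < ε → ε ≤ ε₀ →
      K⁻¹ * ε * thetaOmega om ε ^ 2 ≤
        ∫ r in Set.Ioc 0 (ε * thetaOmega om ε), max (om r - 2 * r / ε) 0 := by
  obtain ⟨c, hc, η₀, hη₀, hd⟩ := hom.exists_doubling hliminf
  obtain ⟨k, hk⟩ := pow_unbounded_of_one_lt (8 / (c - 1)) hc.1
  rw [div_lt_iff₀ (by linarith [hc.1])] at hk
  obtain ⟨hcont, -, -, h0, hnn⟩ := id hom
  have hω1 : 0 ≤ om 1 := hnn 1 (mem_Ici.2 zero_le_one)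
  set κ := (c / 2) ^ k
  refine ⟨16 / κ ^ 2, by positivity [hc.1], min η₀ 1 / (2 * om 1 + 1), by positivity, ?_⟩
  intro ε hε hεle
  have hR : 2 * ε * om 1 ≤ min η₀ 1 := by
    rw [le_div_iff₀ (by positivity)] at hεle
    nlinarith
  obtain ⟨x, hx, hmax⟩ := exists_isMaxOn_Ici_of_le (g := fun r => om r - r / ε)
    (R := 2 * ε * om 1) (by positivity)
    ((hcont.mono Icc_subset_Ici_self).sub (by fun_prop)) fun r hr => by
      have := hom.mul_le_self hε.le (hR.trans (min_le_right _ _)) hr.le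
      simp only [h0, zero_div, sub_zero, sub_nonpos]
      rwa [le_div_iff₀' hε]
  have hθ : thetaOmega om ε = om x - x / ε :=
    IsGreatest.csSup_eq ⟨mem_image_of_mem _ (mem_Ici.2 hx.1), forall_mem_image.2 hmax⟩
  rw [hθ]
  calc (16 / κ ^ 2)⁻¹ * ε * (om x - x / ε) ^ 2 = ε * (κ * (om x - x / ε)) ^ 2 / 16 := by
        field_simp
    _ ≤ _ := hom.integral_lower_bound_of_isMaxOn hε hc hk.le hd
        ⟨hx.1, hx.2.trans (hR.trans (min_le_left _ _))⟩ hmax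

/-- **Integral lower bound.** If `ω` is a modulus, positive on `(0,∞)`, with
`liminf_{η→0⁺} 2ω(η)/ω(2η) > 1`, then there is `K > 0` such that for all sufficiently
small `ε > 0`, `∫_0^{ε θ_ω(ε)} max(ω(r) - 2r/ε, 0) dr ≥ K⁻¹ ε θ_ω(ε)²`. -/
theorem integral_lower_bound (om : ℝ → ℝ) (hom : IsModulus om)
    (hpos : ∀ r > (0:ℝ), 0 < om r)
    (hliminf :
      1 < Filter.liminf (fun η : ℝ => 2 * om η / om (2 * η)) (nhdsWithin 0 (Set.Ioi 0))) :
    ∃ K > (0:ℝ), ∃ ε₀ > (0:ℝ), ∀ ε : ℝ, 0 < ε → ε ≤ ε₀ →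
      K⁻¹ * ε * thetaOmega om ε ^ 2 ≤
        ∫ r in Set.Ioc 0 (ε * thetaOmega om ε), max (om r - 2 * r / ε) 0 :=
  integral_lower_bound_general om hom hliminf
end
end
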